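/- arXiv:1707.06628 — 5 statements merged into one kernel-verified Lean document; each statement's English description precedes it below -/
import Mathlib

section
/- Let n ≥ 1, let θ be a real number, and define e_θ : F_2^n → ℂ by e_θ(x) = e^{iθ|x|}. Then for every x ∈ F_2^n, the weighted convolution of e_θ with its complex conjugate satisfies 2^{−n} · Σ_{y ∈ F_2^n} e_θ(y) · conj(e_θ(x+y)) = (cos θ)^{|x|}. -/
/-!
Since `e_θ(y) = ∏ⱼ φ(yⱼ)` with `φ(0) = 1`, `φ(1) = e^{iθ}`, the convolution sum factors over
coordinates into `∏ⱼ ∑_{b ∈ F_2} φ(b) conj φ(xⱼ + b)`. The factor is `1 + |e^{iθ}|² = 2` when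
`xⱼ = 0` and `e^{-iθ} + e^{iθ} = 2 cos θ` when `xⱼ = 1`.
-/

open Finset

lemma pow_hammingNorm {ι β M : Type*} [Fintype ι] [Zero β] [DecidableEq β] [CommMonoid M]
    (a : M) (x : ι → β) : a ^ hammingNorm x = ∏ i, if x i = 0 then 1 else a := by
  rw [hammingNorm, ← prod_const, prod_filter]
  exact prod_congr rfl fun i _ => by split_ifs <;> simp_all

lemma sum_prod_mul_conj_prod_add {ι G R : Type*} [Fintype ι] [DecidableEq ι] [Fintype G] [Add G]
    [CommSemiring R] [StarRing R] (φ : G → R) (x : ι → G) :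
    ∑ y : ι → G, (∏ i, φ (y i)) * starRingEnd R (∏ i, φ (x i + y i))
      = ∏ i, ∑ b, φ b * starRingEnd R (φ (x i + b)) := by
  rw [Fintype.prod_sum]
  exact sum_congr rfl fun y _ => by rw [map_prod, ← prod_mul_distrib]

lemma ZMod.sum_two_mul_conj_add {K : Type*} [RCLike K] {u : K} (hu : ‖u‖ = 1) (a : ZMod 2) :
    ∑ b : ZMod 2, (if b = 0 then 1 else u) * starRingEnd K (if a + b = 0 then 1 else u)
      = 2 * if a = 0 then 1 else (RCLike.re u : K) := by
  rw [show (univ : Finset (ZMod 2)) = {0, 1} from rfl, sum_pair zero_ne_one]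
  obtain rfl | rfl : a = 0 ∨ a = 1 := by revert a; decide
  · simp [RCLike.mul_conj, hu, one_add_one_eq_two]
  · simp [add_comm _ u, RCLike.add_conj, show (1 + 1 : ZMod 2) = 0 from rfl]

theorem weighted_convolution_exp_eq_cos_pow_general
    (n : ℕ) (θ : ℝ) (eθ : (Fin n → ZMod 2) → ℂ)
    (heθ : ∀ x, eθ x = Complex.exp (Complex.I * (θ : ℂ) * (hammingNorm x : ℂ))) :
    ∀ x : Fin n → ZMod 2,
      (∑ y : Fin n → ZMod 2, eθ y * (starRingEnd ℂ) (eθ (x + y))) / 2 ^ n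
        = ((Real.cos θ : ℂ)) ^ (hammingNorm x) := by
  intro x
  set u := Complex.exp (θ * Complex.I)
  have heθ_prod (y : Fin n → ZMod 2) : eθ y = ∏ i, if y i = 0 then 1 else u := by
    rw [heθ, ← pow_hammingNorm, ← Complex.exp_nat_mul]
    ring_nf
  have hu : ‖u‖ = 1 := Complex.norm_exp_ofReal_mul_I θ
  simp only [heθ_prod, Pi.add_apply]
  rw [sum_prod_mul_conj_prod_add (fun b => if b = 0 then 1 else u),
    prod_congr rfl fun i _ => ZMod.sum_two_mul_conj_add hu (x i), prod_mul_distrib, prod_const, card_univ, Fintype.card_fin, ← pow_hammingNorm]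
  simp only [RCLike.re_to_complex, u, Complex.exp_ofReal_mul_I_re]
  exact mul_div_cancel_left₀ _ (pow_ne_zero _ two_ne_zero)

/-- For `n ≥ 1`, `θ : ℝ`, and `e_θ(x) = e^{iθ|x|}` on `F_2^n`,
the weighted convolution of `e_θ` with its conjugate satisfies
`2^{-n} ∑_y e_θ(y) conj(e_θ(x+y)) = (cos θ)^{|x|}` for every `x`. -/
theorem weighted_convolution_exp_eq_cos_pow
    (n : ℕ) (hn : 1 ≤ n) (θ : ℝ) (eθ : (Fin n → ZMod 2) → ℂ)
    (heθ : ∀ x, eθ x = Complex.exp (Complex.I * (θ : ℂ) * (hammingNorm x : ℂ))) :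
    ∀ x : Fin n → ZMod 2,
      (∑ y : Fin n → ZMod 2, eθ y * (starRingEnd ℂ) (eθ (x + y))) / 2 ^ n
        = ((Real.cos θ : ℂ)) ^ (hammingNorm x) :=
  weighted_convolution_exp_eq_cos_pow_general n θ eθ heθ
end

section
/- Let n ≥ 1 and let Q ⊊ F_2^n be a proper F_2-linear subspace. Then for every real θ, E_{u∼U_n} | E_{x∼μ_{Q+u}} e^{iθ|x|} − E_{x∼U_n} e^{iθ|x|} |^2 = E_{y∼μ_Q} (cos θ)^{|y|} − ((cos θ + 1)/2)^n, where Q+u = {q+u : q ∈ Q} is the coset of Q by u. -/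
open Finset Complex ComplexConjugate

/-!
Write `c = e^{iθ}`, so that `e^{iθ|v|} = c^{|v|}`. Averaging the coset averages over `u` gives the
global average, so the left side is a variance: the mean square of the coset averages minus the
squared global mean. Since `c^{|v|}` factors over the coordinates, the autocorrelation
`∑_u c^{|x+u|} conj (c^{|y+u|})` equals `2^n (cos θ)^{|x-y|}`, and as `Q` is a group the mean
square collapses to the mean of `(cos θ)^{|y|}` over `Q`. The global mean is `((1 + c)/2)^n`, and
`|1 + c|² / 4 = (1 + cos θ)/2`.
-/

lemma ZMod.sum_univ_two {M : Type*} [AddCommMonoid M] (f : ZMod 2 → M) : ∑ a, f a = f 0 + f 1 :=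
  Fin.sum_univ_two f

lemma pow_hammingNorm_eq_prod {ι : Type*} [Fintype ι] {β : ι → Type*}
    [∀ i, DecidableEq (β i)] [∀ i, Zero (β i)] {M : Type*} [CommMonoid M] (c : M)
    (v : ∀ i, β i) :
    c ^ hammingNorm v = ∏ i, if v i = 0 then 1 else c := by
  rw [hammingNorm, ← prod_const, prod_filter]
  simp only [ne_eq, ite_not]

lemma Complex.norm_one_add_sq_of_norm_eq_one {c : ℂ} (hc : ‖c‖ = 1) :
    ‖1 + c‖ ^ 2 = 2 * (1 + c.re) := by
  rw [← normSq_eq_norm_sq, normSq_add, normSq_one, normSq_eq_norm_sq, hc, one_mul, conj_re]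
  ring

lemma sum_norm_sub_sq_of_sum_eq_card_smul {E ι : Type*} [NormedAddCommGroup E]
    [InnerProductSpace ℝ E] (t : Finset ι) (a : ι → E) (m : E)
    (hm : ∑ i ∈ t, a i = (#t : ℝ) • m) :
    ∑ i ∈ t, ‖a i - m‖ ^ 2 = ∑ i ∈ t, ‖a i‖ ^ 2 - #t * ‖m‖ ^ 2 := by
  simp_rw [norm_sub_sq_real, sum_add_distrib, sum_sub_distrib, ← mul_sum, ← sum_inner, hm,
    real_inner_smul_left, real_inner_self_eq_norm_sq, sum_const, nsmul_eq_mul]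
  ring

section TranslationSums

variable {G : Type*} [AddCommGroup G] [Fintype G]

lemma sum_sum_add_eq_card_smul_sum {M : Type*} [AddCommMonoid M] (s : Finset G) (f : G → M) :
    ∑ u, ∑ x ∈ s, f (x + u) = #s • ∑ v, f v := by
  rw [sum_comm, ← sum_const]
  exact sum_congr rfl fun x _ => Equiv.sum_comp (Equiv.addLeft x) f

lemma sum_norm_sq_sum_add (s : Finset G) (f : G → ℂ) :
    (∑ u, ‖∑ x ∈ s, f (x + u)‖ ^ 2 : ℂ) =
      ∑ x ∈ s, ∑ y ∈ s, ∑ u, f (x - y + u) * conj (f u) := by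
  simp_rw [← mul_conj', map_sum, sum_mul_sum]
  rw [sum_comm]
  refine sum_congr rfl fun x _ => ?_
  rw [sum_comm]
  refine sum_congr rfl fun y _ => Fintype.sum_equiv (Equiv.addRight y) _ _ fun u => ?_
  change _ = f (x - y + (u + y)) * conj (f (u + y))
  rw [sub_add_add_cancel, add_comm u]

lemma sum_sum_sub_of_mem {S M : Type*} [SetLike S G] [AddSubgroupClass S G] [AddCommMonoid M]
    (H : S) [DecidablePred (· ∈ H)] (g : G → M) :
    ∑ x ∈ univ.filter (· ∈ H), ∑ y ∈ univ.filter (· ∈ H), g (x - y) =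
      #(univ.filter (· ∈ H)) • ∑ y ∈ univ.filter (· ∈ H), g y := by
  rw [← sum_const]
  refine sum_congr rfl fun x hx => sum_nbij' (x - ·) (x - ·) (fun y hy => ?_) (fun y hy => ?_)
    (fun y _ => sub_sub_cancel x y) (fun y _ => sub_sub_cancel x y) fun _ _ => rfl <;>
    simp_all [sub_mem]

end TranslationSums

section HammingWeights

variable {n : ℕ}

lemma sum_pow_hammingNorm {R : Type*} [CommSemiring R] (c : R) :
    ∑ v : Fin n → ZMod 2, c ^ hammingNorm v = (1 + c) ^ n := by
  simp_rw [pow_hammingNorm_eq_prod]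
  rw [← Fintype.prod_sum fun _ a => if a = 0 then 1 else c]
  simp [ZMod.sum_univ_two]

lemma sum_ite_add_mul_conj_ite {c : ℂ} (hc : ‖c‖ = 1) (b : ZMod 2) :
    ∑ a : ZMod 2, (if b + a = 0 then 1 else c) * conj (if a = 0 then 1 else c) =
      2 * if b = 0 then 1 else (c.re : ℂ) := by
  have hcc : c * conj c = 1 := by simp [mul_conj', hc]
  have h10 : (1 : ZMod 2) ≠ 0 := by decide
  obtain rfl | rfl : b = 0 ∨ b = 1 := by decide +revert
  · norm_num [ZMod.sum_univ_two, hcc, h10]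
  · simpa [ZMod.sum_univ_two, show (1 + 1 : ZMod 2) = 0 by decide, h10] using add_conj c

lemma sum_pow_hammingNorm_add_mul_conj {c : ℂ} (hc : ‖c‖ = 1) (z : Fin n → ZMod 2) :
    ∑ u : Fin n → ZMod 2, c ^ hammingNorm (z + u) * conj (c ^ hammingNorm u) =
      2 ^ n * (c.re : ℂ) ^ hammingNorm z := by
  simp_rw [pow_hammingNorm_eq_prod, map_prod, ← prod_mul_distrib, Pi.add_apply]
  rw [← Fintype.prod_sum fun i a =>
    (if z i + a = 0 then 1 else c) * conj (if a = 0 then 1 else c)]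
  simp_rw [sum_ite_add_mul_conj_ite hc, prod_mul_distrib, prod_const, card_univ, Fintype.card_fin]

lemma sum_norm_sq_sum_pow_hammingNorm_add {S : Type*} [SetLike S (Fin n → ZMod 2)]
    [AddSubgroupClass S (Fin n → ZMod 2)] (H : S) [DecidablePred (· ∈ H)] {c : ℂ}
    (hc : ‖c‖ = 1) :
    ∑ u, ‖∑ x ∈ univ.filter (· ∈ H), c ^ hammingNorm (x + u)‖ ^ 2 =
      2 ^ n * #(univ.filter (· ∈ H)) *
        ∑ y ∈ univ.filter (· ∈ H), c.re ^ hammingNorm y := by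
  apply ofReal_injective
  push_cast
  rw [sum_norm_sq_sum_add (f := fun v => c ^ hammingNorm v)]
  simp_rw [sum_pow_hammingNorm_add_mul_conj hc, ← mul_sum]
  rw [sum_sum_sub_of_mem H (fun z => (c.re : ℂ) ^ hammingNorm z), nsmul_eq_mul]
  ring

lemma norm_sum_pow_hammingNorm_div_sq {c : ℂ} (hc : ‖c‖ = 1) :
    ‖(∑ v : Fin n → ZMod 2, c ^ hammingNorm v) / 2 ^ n‖ ^ 2 = ((1 + c.re) / 2) ^ n := by
  rw [sum_pow_hammingNorm, ← div_pow, norm_pow, ← pow_mul, mul_comm, pow_mul, norm_div,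
    div_pow, norm_one_add_sq_of_norm_eq_one hc]
  norm_num
  ring

end HammingWeights

lemma exp_I_mul_mul_natCast (θ : ℝ) (k : ℕ) : exp (I * θ * k) = exp (θ * I) ^ k := by
  rw [← exp_nat_mul]
  ring_nf

theorem expectation_coset_exp_dist_sq_eq_general
    (n : ℕ) (Q : Submodule (ZMod 2) (Fin n → ZMod 2))
    [DecidablePred (· ∈ Q)] (θ : ℝ) :
    (∑ u : Fin n → ZMod 2,
        (‖
          ((∑ x ∈ Finset.univ.filter (· ∈ Q),
              Complex.exp (Complex.I * (θ : ℂ) * (hammingNorm (x + u) : ℂ)))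
              / ((Finset.univ.filter (· ∈ Q)).card : ℂ)
            - (∑ x : Fin n → ZMod 2,
                Complex.exp (Complex.I * (θ : ℂ) * (hammingNorm x : ℂ))) / 2 ^ n)‖) ^ 2)
        / 2 ^ n
      = (∑ y ∈ Finset.univ.filter (· ∈ Q), Real.cos θ ^ (hammingNorm y))
          / ((Finset.univ.filter (· ∈ Q)).card : ℝ)
        - ((Real.cos θ + 1) / 2) ^ n := by
  have hc : ‖exp (θ * I)‖ = 1 := norm_exp_ofReal_mul_I θ
  rw [← exp_ofReal_mul_I_re θ]
  simp_rw [exp_I_mul_mul_natCast]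
  set c := exp (θ * I)
  set s := univ.filter (· ∈ Q)
  have hq : (#s : ℝ) ≠ 0 := by
    exact_mod_cast (card_pos.mpr ⟨0, mem_filter.mpr ⟨mem_univ _, Q.zero_mem⟩⟩).ne'
  have hN : (#(univ : Finset (Fin n → ZMod 2)) : ℝ) = 2 ^ n := by simp
  have hmean : ∑ u, (∑ x ∈ s, c ^ hammingNorm (x + u)) / #s =
      (#(univ : Finset (Fin n → ZMod 2)) : ℝ) •
        ((∑ x : Fin n → ZMod 2, c ^ hammingNorm x) / 2 ^ n) := by
    rw [← sum_div, sum_sum_add_eq_card_smul_sum (f := fun v => c ^ hammingNorm v), hN,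
      nsmul_eq_mul, mul_div_cancel_left₀ _ (by exact_mod_cast hq), real_smul]
    push_cast
    field_simp
  rw [sum_norm_sub_sq_of_sum_eq_card_smul univ _ _ hmean, norm_sum_pow_hammingNorm_div_sq hc, hN]
  simp only [norm_div, div_pow, ← sum_div]
  rw [sum_norm_sq_sum_pow_hammingNorm_add Q hc, norm_natCast]
  field_simp
  ring

/-- For a proper linear code `Q ⊊ F_2^n` and any real `θ`,
`E_{u∼U_n} |E_{x∼μ_{Q+u}} e^{iθ|x|} − E_{x∼U_n} e^{iθ|x|}|² =
 E_{y∼μ_Q} (cos θ)^{|y|} − ((cos θ + 1)/2)^n`. -/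
theorem expectation_coset_exp_dist_sq_eq
    (n : ℕ) (hn : 1 ≤ n) (Q : Submodule (ZMod 2) (Fin n → ZMod 2))
    [DecidablePred (· ∈ Q)] (hQ : Q ≠ ⊤) (θ : ℝ) :
    (∑ u : Fin n → ZMod 2,
        (‖
          ((∑ x ∈ Finset.univ.filter (· ∈ Q),
              Complex.exp (Complex.I * (θ : ℂ) * (hammingNorm (x + u) : ℂ)))
              / ((Finset.univ.filter (· ∈ Q)).card : ℂ)
            - (∑ x : Fin n → ZMod 2,
                Complex.exp (Complex.I * (θ : ℂ) * (hammingNorm x : ℂ))) / 2 ^ n)‖) ^ 2)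
        / 2 ^ n
      = (∑ y ∈ Finset.univ.filter (· ∈ Q), Real.cos θ ^ (hammingNorm y))
          / ((Finset.univ.filter (· ∈ Q)).card : ℝ)
        - ((Real.cos θ + 1) / 2) ^ n :=
  expectation_coset_exp_dist_sq_eq_general n Q θ
end

section
/- For each ε > 0 there exist δ > 0 and N such that for every integer n ≥ N and every real number Δ with 0 < Δ ≤ δn, the normalized Hamming ball volume satisfies v_n(n/2 − Δ) ≥ e^{−(2+ε)·(Δ + √(2n) + 2)^2 / n}. -/
/-!
Sum the binomial coefficients `C(n, w)` over the window `k - L < w ≤ k`, where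
`k = ⌊n/2 - Δ⌋` and `L = ⌈√n/2⌉`. Each of them is at least `C(n, j)` for the left end
`j = k + 1 - L`, and climbing from `j` to `⌊n/2⌋ = j + t` multiplies the binomial coefficient
by at most `exp ((t² + 2t)/j)`, because `C(n, i+1)/C(n, i) ≤ 1 + (n - 2i)/i`. Together with
`2ⁿ ≤ 2√n · C(n, ⌊n/2⌋)` the volume is at least `exp (-(t² + 2t)/j) / 4`. Finally
`t + 1 ≤ T := Δ + √n/2 + 2` and `j > n/2 - T` bound the exponent by `(2 + ε/2) T²/n` once `T` is
a small fraction of `n`, and the gap between `T` and `Δ + √(2n) + 2` pays for the factor `1/4`.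
-/

open Finset

theorem Nat.choose_le_choose_of_le_of_le_half {n j w : ℕ} (hjw : j ≤ w) (hw : w ≤ n / 2) :
    n.choose j ≤ n.choose w := by
  induction w, hjw using Nat.le_induction with
  | base => exact le_rfl
  | succ w _ ih =>
    exact (ih (by omega)).trans (Nat.choose_le_succ_of_lt_half_left (by omega))

theorem Nat.sixteen_pow_le_centralBinom_sq_mul {m : ℕ} (hm : 1 ≤ m) :
    16 ^ m ≤ m.centralBinom ^ 2 * (4 * m) := by
  induction m, hm using Nat.le_induction with
  | base => decide
  | succ m _ ih =>
    refine Nat.le_of_mul_le_mul_left ?_ (show 0 < (m + 1) ^ 2 by positivity)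
    calc (m + 1) ^ 2 * 16 ^ (m + 1) = 16 * (m + 1) ^ 2 * 16 ^ m := by ring
      _ ≤ 16 * (m + 1) ^ 2 * (m.centralBinom ^ 2 * (4 * m)) := by gcongr
      _ = m.centralBinom ^ 2 * (16 * (m + 1)) * (4 * m * (m + 1)) := by ring
      _ ≤ m.centralBinom ^ 2 * (16 * (m + 1)) * (2 * m + 1) ^ 2 := by gcongr; nlinarith
      _ = ((m + 1) * (m + 1).centralBinom) ^ 2 * (4 * (m + 1)) := by
        rw [Nat.succ_mul_centralBinom_succ]; ring
      _ = (m + 1) ^ 2 * ((m + 1).centralBinom ^ 2 * (4 * (m + 1))) := by ring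

theorem Nat.four_pow_le_choose_half_sq_mul {n : ℕ} (hn : 1 ≤ n) :
    4 ^ n ≤ n.choose (n / 2) ^ 2 * (4 * n) := by
  obtain ⟨m, rfl | rfl⟩ := Nat.even_or_odd' n
  · rw [Nat.mul_div_cancel_left m two_pos, ← Nat.centralBinom_eq_two_mul_choose]
    calc 4 ^ (2 * m) = 16 ^ m := by rw [pow_mul]; norm_num
      _ ≤ m.centralBinom ^ 2 * (4 * m) := Nat.sixteen_pow_le_centralBinom_sq_mul (by omega)
      _ ≤ m.centralBinom ^ 2 * (4 * (2 * m)) := by gcongr; omega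
  · have hcb : (m + 1).centralBinom = 2 * (2 * m + 1).choose m := by
      rw [Nat.centralBinom_eq_two_mul_choose, show 2 * (m + 1) = 2 * m + 1 + 1 by ring,
        Nat.choose_succ_succ', Nat.choose_symm_half]
      ring
    have h := Nat.sixteen_pow_le_centralBinom_sq_mul (m := m + 1) (by omega)
    rw [hcb, show (2 * m + 1) / 2 = m by omega] at *
    refine Nat.le_of_mul_le_mul_left ?_ (show 0 < 4 by norm_num)
    calc 4 * 4 ^ (2 * m + 1) = 16 ^ (m + 1) := by rw [pow_succ, pow_mul]; ring
      _ ≤ (2 * (2 * m + 1).choose m) ^ 2 * (4 * (m + 1)) := h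
      _ ≤ 4 * ((2 * m + 1).choose m ^ 2 * (4 * (2 * m + 1))) := by ring_nf; gcongr; omega

theorem Nat.two_pow_le_choose_half_mul_sqrt {n : ℕ} (hn : 1 ≤ n) :
    (2 : ℝ) ^ n ≤ n.choose (n / 2) * (2 * √n) := by
  refine (pow_le_pow_iff_left₀ (by positivity) (by positivity) two_ne_zero).1 ?_
  rw [mul_pow, mul_pow, Real.sq_sqrt n.cast_nonneg, ← pow_mul, pow_mul']
  exact_mod_cast Nat.four_pow_le_choose_half_sq_mul hn

theorem Nat.choose_succ_le_choose_mul_exp {n j a : ℕ} (hj : 1 ≤ j) (hn : n ≤ 2 * j + a) :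
    (n.choose (j + 1) : ℝ) ≤ n.choose j * Real.exp (a / j) := by
  have hj0 : (0 : ℝ) < j := by exact_mod_cast hj
  have hrec : (n.choose (j + 1) : ℝ) * (j + 1) = n.choose j * ((n - j : ℕ) : ℝ) := by
    exact_mod_cast Nat.choose_succ_right_eq n j
  have hnj : ((n - j : ℕ) : ℝ) ≤ j + a := by exact_mod_cast (show n - j ≤ j + a by omega)
  calc (n.choose (j + 1) : ℝ) ≤ n.choose (j + 1) * (j + 1) / j := by
        rw [le_div_iff₀ hj0]; gcongr; linarith
    _ = n.choose j * ((n - j : ℕ) : ℝ) / j := by rw [hrec]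
    _ ≤ n.choose j * (j + a) / j := by gcongr
    _ = n.choose j * (1 + a / j) := by field_simp
    _ ≤ n.choose j * Real.exp (a / j) := by gcongr; linarith [Real.add_one_le_exp (a / j)]

theorem Nat.choose_add_le_choose_mul_exp {n j : ℕ} (t : ℕ) (hj : 1 ≤ j)
    (hn : n ≤ 2 * (j + t) + 1) :
    (n.choose (j + t) : ℝ) ≤ n.choose j * Real.exp ((t ^ 2 + 2 * t) / j) := by
  induction t generalizing j with
  | zero => simp
  | succ t ih =>
    calc (n.choose (j + (t + 1)) : ℝ) = n.choose (j + 1 + t) := by rw [add_comm t, add_assoc]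
      _ ≤ n.choose (j + 1) * Real.exp ((t ^ 2 + 2 * t) / (j + 1 : ℕ)) :=
        ih (by omega) (by omega)
      _ ≤ n.choose j * Real.exp ((2 * t + 3 : ℕ) / j) * Real.exp ((t ^ 2 + 2 * t) / j) := by
        gcongr
        · exact Nat.choose_succ_le_choose_mul_exp hj (by omega)
        · linarith
      _ = n.choose j * Real.exp (((t + 1 : ℕ) ^ 2 + 2 * (t + 1 : ℕ)) / j) := by
        rw [mul_assoc, ← Real.exp_add]; push_cast; ring_nf

theorem card_filter_hammingNorm_eq_choose {ι : Type*} [Fintype ι] [DecidableEq ι] (w : ℕ) :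
    #{x : ι → ZMod 2 | hammingNorm x = w} = (Fintype.card ι).choose w := by
  have hone : ∀ a : ZMod 2, a ≠ 0 → a = 1 := by decide
  rw [← Finset.card_univ, ← Finset.card_powersetCard]
  refine Finset.card_nbij' (fun x => ({i | x i ≠ 0} : Finset ι))
    (fun S i => if i ∈ S then 1 else 0) ?_ ?_ ?_ ?_
  · intro x hx
    simpa [hammingNorm] using hx
  · intro S hS
    simp_all [hammingNorm]
  · intro x _
    funext i
    by_cases h : x i = 0 <;> simp [h, hone]
  · intro S _
    ext i
    by_cases h : i ∈ S <;> simp [h]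

theorem card_hammingNorm_le_eq_sum_choose {ι : Type*} [Fintype ι] [DecidableEq ι] (k : ℕ) :
    Nat.card {x : ι → ZMod 2 // hammingNorm x ≤ k} =
      ∑ w ∈ range (k + 1), (Fintype.card ι).choose w := by
  rw [Nat.card_eq_fintype_card, Fintype.card_subtype,
    card_eq_sum_card_fiberwise (f := hammingNorm) (t := range (k + 1))]
  · refine sum_congr rfl fun w hw => ?_
    rw [← card_filter_hammingNorm_eq_choose, filter_filter]
    congr 1
    ext x
    simp only [mem_filter, mem_univ, true_and, and_iff_right_iff_imp]
    intro hx
    rw [mem_range] at hw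
    omega
  · intro x hx
    simpa [Nat.lt_succ_iff] using hx

theorem Nat.mul_choose_le_sum_choose {n j k : ℕ} (hk : k ≤ n / 2) :
    (k + 1 - j) * n.choose j ≤ ∑ w ∈ range (k + 1), n.choose w := by
  calc (k + 1 - j) * n.choose j = ∑ _w ∈ Ico j (k + 1), n.choose j := by simp
    _ ≤ ∑ w ∈ Ico j (k + 1), n.choose w :=
      sum_le_sum fun w hw => Nat.choose_le_choose_of_le_of_le_half (mem_Ico.1 hw).1
        (by have := (mem_Ico.1 hw).2; omega)
    _ ≤ ∑ w ∈ range (k + 1), n.choose w := by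
      rw [range_eq_Ico]
      exact sum_le_sum_of_subset (Ico_subset_Ico_left (Nat.zero_le j))

theorem mul_exp_neg_le_card_hammingNorm_le_div_two_pow {n j k t : ℕ} (hj : 1 ≤ j)
    (hk : k ≤ n / 2) (ht : j + t = n / 2) :
    ((k + 1 - j : ℕ) : ℝ) / (2 * √n) * Real.exp (-((t ^ 2 + 2 * t) / j)) ≤
      Nat.card {x : Fin n → ZMod 2 // hammingNorm x ≤ k} / 2 ^ n := by
  have hn : 1 ≤ n := by omega
  have hcount : ((k + 1 - j : ℕ) : ℝ) * n.choose j ≤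
      Nat.card {x : Fin n → ZMod 2 // hammingNorm x ≤ k} := by
    rw [card_hammingNorm_le_eq_sum_choose, Fintype.card_fin]
    exact_mod_cast Nat.mul_choose_le_sum_choose hk
  have hmiddle : (n.choose (n / 2) : ℝ) * Real.exp (-((t ^ 2 + 2 * t) / j)) ≤ n.choose j := by
    rw [← ht, Real.exp_neg, ← div_eq_mul_inv, div_le_iff₀ (Real.exp_pos _)]
    exact Nat.choose_add_le_choose_mul_exp t hj (by omega)
  rw [le_div_iff₀ (by positivity)]
  calc ((k + 1 - j : ℕ) : ℝ) / (2 * √n) * Real.exp (-((t ^ 2 + 2 * t) / j)) * 2 ^ n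
      ≤ ((k + 1 - j : ℕ) : ℝ) / (2 * √n) * Real.exp (-((t ^ 2 + 2 * t) / j)) *
          (n.choose (n / 2) * (2 * √n)) := by
        gcongr; exact Nat.two_pow_le_choose_half_mul_sqrt hn
    _ = ((k + 1 - j : ℕ) : ℝ) * (n.choose (n / 2) * Real.exp (-((t ^ 2 + 2 * t) / j))) := by
        field_simp
    _ ≤ ((k + 1 - j : ℕ) : ℝ) * n.choose j := by gcongr
    _ ≤ Nat.card {x : Fin n → ZMod 2 // hammingNorm x ≤ k} := hcount

theorem exp_neg_div_four_le_card_hammingNorm_le_div_two_pow {n : ℕ} {Δ T : ℝ} (hΔ : 0 ≤ Δ)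
    (hT : Δ + √n / 2 + 2 ≤ T) (hTn : 2 * T < n) :
    Real.exp (-(T ^ 2 / (n / 2 - T))) / 4 ≤
      Nat.card {x : Fin n → ZMod 2 // (hammingNorm x : ℝ) ≤ n / 2 - Δ} / 2 ^ n := by
  have hn : (0 : ℝ) < n := by linarith [Real.sqrt_nonneg n]
  have hk₀ : (0 : ℝ) ≤ n / 2 - Δ := by linarith [Real.sqrt_nonneg n]
  have hcard : Nat.card {x : Fin n → ZMod 2 // (hammingNorm x : ℝ) ≤ n / 2 - Δ} =
      Nat.card {x : Fin n → ZMod 2 // hammingNorm x ≤ ⌊(n : ℝ) / 2 - Δ⌋₊} :=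
    Nat.card_congr (Equiv.subtypeEquivRight fun x => (Nat.le_floor_iff hk₀).symm)
  have hk_le := Nat.floor_le hk₀
  have hk_gt := Nat.lt_floor_add_one ((n : ℝ) / 2 - Δ)
  rw [hcard]
  generalize ⌊(n : ℝ) / 2 - Δ⌋₊ = k at hk_le hk_gt
  obtain ⟨L, hL_ge, hL_lt⟩ : ∃ L : ℕ, √n / 2 ≤ L ∧ (L : ℝ) < √n / 2 + 1 :=
    ⟨_, Nat.le_ceil _, Nat.ceil_lt_add_one (by positivity)⟩
  have hL : 0 < L := by exact_mod_cast (show (0 : ℝ) < L by linarith [Real.sqrt_pos.2 hn])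
  have hLk : L < k := by exact_mod_cast (show (L : ℝ) < k by linarith)
  have hkn : k ≤ n / 2 := by
    rw [Nat.le_div_iff_mul_le two_pos]; exact_mod_cast (show (k : ℝ) * 2 ≤ n by linarith)
  obtain ⟨j, hjL⟩ : ∃ j, j + L = k + 1 := ⟨k + 1 - L, by omega⟩
  obtain ⟨t, hjt⟩ : ∃ t, j + t = n / 2 := ⟨n / 2 - j, by omega⟩
  have hj : (j : ℝ) = k + 1 - L := by linarith [(by exact_mod_cast hjL : (j : ℝ) + L = k + 1)]
  have ht : (t : ℝ) ≤ n / 2 - j := by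
    have : (j : ℝ) + t = (n / 2 : ℕ) := by exact_mod_cast hjt
    linarith [Nat.cast_div_le (m := n) (n := 2) (α := ℝ)]
  have hexponent : ((t : ℝ) ^ 2 + 2 * t) / j ≤ T ^ 2 / (n / 2 - T) :=
    div_le_div₀ (sq_nonneg T) (by nlinarith) (by linarith) (by linarith)
  have hquarter : (1 : ℝ) / 4 ≤ ((k + 1 - j : ℕ) : ℝ) / (2 * √n) := by
    rw [show k + 1 - j = L by omega, div_le_div_iff₀ (by norm_num) (by positivity)]
    linarith
  calc Real.exp (-(T ^ 2 / (n / 2 - T))) / 4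
      ≤ ((k + 1 - j : ℕ) : ℝ) / (2 * √n) * Real.exp (-((t ^ 2 + 2 * t) / j)) := by
        rw [div_eq_mul_one_div, mul_comm]
        gcongr
    _ ≤ _ := mul_exp_neg_le_card_hammingNorm_le_div_two_pow (by omega) hkn hjt

theorem log_four_add_sq_div_half_sub_le {n ε T s : ℝ} (hn : 0 < n) (hε : 0 < ε) (hT : 0 ≤ T)
    (hTn : (4 + ε) * T ≤ ε * n / 2) (hs : T + 9 / 10 * √n ≤ s) :
    Real.log 4 + T ^ 2 / (n / 2 - T) ≤ (2 + ε) * s ^ 2 / n := by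
  have hhalf : 0 < n / 2 - T := by nlinarith
  have hlog : Real.log 4 < 162 / 100 := by
    rw [show (4 : ℝ) = 2 ^ 2 by norm_num, Real.log_pow]
    linarith [Real.log_two_lt_d9]
  have hquot : T ^ 2 / (n / 2 - T) ≤ (2 + ε / 2) * T ^ 2 / n := by
    rw [div_le_div_iff₀ hhalf hn]
    nlinarith [mul_nonneg (sq_nonneg T) (sub_nonneg.2 hTn)]
  have hsq : T ^ 2 + 81 / 100 * n ≤ s ^ 2 := by
    have := Real.sq_sqrt hn.le
    nlinarith [Real.sqrt_nonneg n]
  calc Real.log 4 + T ^ 2 / (n / 2 - T) ≤ ((2 + ε / 2) * T ^ 2 + 162 / 100 * n) / n := by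
        rw [add_div, mul_div_cancel_right₀ _ hn.ne']; linarith
    _ ≤ (2 + ε) * s ^ 2 / n := by
        gcongr
        nlinarith [sq_nonneg T]

theorem four_add_mul_add_sqrt_le {ε Δ n : ℝ} (hε : 0 < ε) (hn : (20 * (4 + ε) / ε) ^ 2 ≤ n)
    (hΔ : Δ ≤ ε / (4 * (4 + ε)) * n) :
    (4 + ε) * (Δ + √n / 2 + 2) ≤ ε * n / 2 := by
  have hroot : 20 * (4 + ε) ≤ ε * √n := by
    rw [← div_le_iff₀' hε]; exact Real.le_sqrt_of_sq_le hn
  have hroot_one : 1 ≤ √n := by nlinarith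
  have hΔ' : (4 + ε) * Δ ≤ ε * n / 4 := by
    rw [div_mul_eq_mul_div, le_div_iff₀ (by positivity)] at hΔ; linarith
  have hroot' : 20 * (4 + ε) * √n ≤ ε * n := by
    nlinarith [mul_le_mul_of_nonneg_right hroot (Real.sqrt_nonneg n),
      Real.mul_self_sqrt (show 0 ≤ n by nlinarith)]
  nlinarith [mul_nonneg (by positivity : (0 : ℝ) ≤ 4 + ε) (by linarith : 0 ≤ 9 / 2 * √n - 2)]

/-- For each `ε > 0` there are `δ > 0` and `N` such that for every
integer `n ≥ N` and real `Δ` with `0 < Δ ≤ δn`, the normalized Hamming ball volume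
satisfies `v_n(n/2 − Δ) ≥ e^{−(2+ε)(Δ + √(2n) + 2)²/n}`. -/
theorem hamming_ball_volume_lower_bound :
    ∀ ε > (0 : ℝ), ∃ δ > (0 : ℝ), ∃ N : ℕ, ∀ n : ℕ, N ≤ n → ∀ Δ : ℝ, 0 < Δ → Δ ≤ δ * n →
      Real.exp (-(2 + ε) * (Δ + Real.sqrt (2 * n) + 2) ^ 2 / n)
        ≤ (Nat.card {x : Fin n → ZMod 2 // (hammingNorm x : ℝ) ≤ (n : ℝ) / 2 - Δ} : ℝ)
            / 2 ^ n := by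
  intro ε hε
  refine ⟨ε / (4 * (4 + ε)), by positivity, ⌈(20 * (4 + ε) / ε) ^ 2⌉₊,
    fun n hn Δ hΔ hΔn => ?_⟩
  set T := Δ + √n / 2 + 2 with hT_def
  have hTn : (4 + ε) * T ≤ ε * n / 2 :=
    four_add_mul_add_sqrt_le hε ((Nat.le_ceil _).trans (by exact_mod_cast hn)) hΔn
  have hT : 0 < T := by positivity
  have hn0 : (0 : ℝ) < n := by nlinarith
  have hs : T + 9 / 10 * √n ≤ Δ + √(2 * n) + 2 := by
    have : (14 / 10 : ℝ) ≤ √2 := Real.le_sqrt_of_sq_le (by norm_num)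
    rw [hT_def, Real.sqrt_mul zero_le_two]
    nlinarith [Real.sqrt_nonneg n]
  calc Real.exp (-(2 + ε) * (Δ + √(2 * n) + 2) ^ 2 / n)
      ≤ Real.exp (-(Real.log 4 + T ^ 2 / (n / 2 - T))) := by
        rw [neg_mul, neg_div, Real.exp_le_exp, neg_le_neg_iff]
        exact log_four_add_sq_div_half_sub_le hn0 hε hT.le hTn hs
    _ = Real.exp (-(T ^ 2 / (n / 2 - T))) / 4 := by
        rw [neg_add, Real.exp_add, Real.exp_neg, Real.exp_log four_pos]; ring
    _ ≤ _ := exp_neg_div_four_le_card_hammingNorm_le_div_two_pow hΔ.le le_rfl (by nlinarith)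
end

section
/- For every integer n ≥ 1 and every real number R with 0 < R ≤ n, there exists an F_2-linear code C ⊆ F_2^n with covering radius at most R and dimension k ≤ ⌈log_2( n·(log 2) / v_n(R) )⌉, where log 2 denotes the natural logarithm of 2. -/
open Finset

/-- The covering radius of `C ⊆ F_2^n`: the least `r ≥ 0` such that `B_n(C; r) = F_2^n`. -/
noncomputable def covRad (n : ℕ) (C : Set (Fin n → ZMod 2)) : ℝ :=
  sInf {r : ℝ | 0 ≤ r ∧ ∀ x : Fin n → ZMod 2, ∃ c ∈ C, (hammingNorm (c + x) : ℝ) ≤ r}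

/-!
Write the Hamming ball as `S`, so that a code `C` has covering radius at most `R` exactly when
`C + S` is the whole space `V`. If `U` is the set of points that `C + S` misses, then
`C + span {z}` misses only points of `U ∩ (z + U)`, and averaging over `z` gives some `z` with
`|U ∩ (z + U)| ≤ |U|² / |V|`. After `k` such steps the missed fraction is at most
`(1 - |S|/|V|)^(2^k) < exp (-2^k |S| / |V|)`. That is below `1 / |V|`, so nothing is missed,
once `2^k |S| ≥ |V| log |V|`.
-/

open scoped Pointwise

theorem Finset.sum_addConvolution {G : Type*} [AddGroup G] [Fintype G] [DecidableEq G]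
    (A B : Finset G) : ∑ x, A.addConvolution B x = #A * #B := by
  rw [← card_product]
  exact (card_eq_sum_card_fiberwise (f := fun ab : G × G ↦ ab.1 + ab.2) (t := univ)
    fun _ _ ↦ mem_coe.2 (mem_univ _)).symm

theorem Finset.exists_card_inter_vadd_mul_le {G : Type*} [AddGroup G] [Fintype G]
    [DecidableEq G] (U : Finset G) : ∃ z : G, #(U ∩ (z +ᵥ U)) * Fintype.card G ≤ #U ^ 2 := by
  have hsum : ∑ z : G, #(U ∩ (z +ᵥ U)) = #U ^ 2 := by
    simp_rw [card_inter_vadd, sum_addConvolution, card_neg, sq]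
  obtain ⟨z, -, hz⟩ := exists_le_of_sum_le (f := fun z ↦ #(U ∩ (z +ᵥ U)) * Fintype.card G)
    (g := fun _ ↦ #U ^ 2) (univ_nonempty (α := G))
    (by rw [← sum_mul, hsum, sum_const, card_univ, smul_eq_mul, mul_comm])
  exact ⟨z, hz⟩

theorem Set.exists_ncard_inter_vadd_mul_le {G : Type*} [AddGroup G] [Finite G] (U : Set G) :
    ∃ z : G, (U ∩ (z +ᵥ U)).ncard * Nat.card G ≤ U.ncard ^ 2 := by
  classical
  have := Fintype.ofFinite G
  obtain ⟨s, rfl⟩ := U.toFinite.exists_finset_coe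
  obtain ⟨z, hz⟩ := s.exists_card_inter_vadd_mul_le
  refine ⟨z, ?_⟩
  rwa [← coe_vadd_finset, ← coe_inter, ncard_coe_finset, ncard_coe_finset,
    Nat.card_eq_fintype_card]

theorem one_sub_pow_lt_exp_neg_mul {v : ℝ} (hv0 : 0 < v) (hv1 : v ≤ 1) {K : ℕ} (hK : K ≠ 0) :
    (1 - v) ^ K < Real.exp (-(K * v)) :=
  calc (1 - v) ^ K < Real.exp (-v) ^ K :=
        pow_lt_pow_left₀ (Real.one_sub_lt_exp_neg hv0.ne') (by linarith) hK
    _ = Real.exp (-(K * v)) := by rw [← Real.exp_nat_mul, mul_neg]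

theorem mul_sub_pow_lt_pow {N m K : ℕ} (hm : 0 < m) (hmN : m ≤ N) (hK : K ≠ 0)
    (h : N * Real.log N ≤ K * m) : N * (N - m) ^ K < N ^ K := by
  have hN : (0 : ℝ) < N := by exact_mod_cast hm.trans_le hmN
  set v : ℝ := m / N
  have hv0 : 0 < v := by positivity
  have hv1 : v ≤ 1 := div_le_one_of_le₀ (by exact_mod_cast hmN) hN.le
  have hexp : Real.exp (-(K * v)) ≤ (N : ℝ)⁻¹ := by
    rw [← Real.exp_log hN, ← Real.exp_neg, Real.exp_le_exp, neg_le_neg_iff]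
    rw [show (K : ℝ) * v = K * m / N by ring, le_div_iff₀ hN]
    linarith
  have hsub : ((N - m : ℕ) : ℝ) = N * (1 - v) := by
    rw [Nat.cast_sub hmN, mul_sub, mul_one, mul_div_cancel₀ _ hN.ne']
  rw [← Nat.cast_lt (α := ℝ), Nat.cast_mul, Nat.cast_pow, hsub, Nat.cast_pow]
  calc (N : ℝ) * (N * (1 - v)) ^ K = N ^ K * (N * (1 - v) ^ K) := by rw [mul_pow]; ring
    _ < N ^ K * (N * (N : ℝ)⁻¹) := by
        gcongr
        exact (one_sub_pow_lt_exp_neg_mul hv0 hv1 hK).trans_le hexp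
    _ = N ^ K := by field_simp

section Covering

variable {V : Type*} [AddCommGroup V]

theorem compl_add_subset_inter_vadd {C D S : Set V} {z : V} (hC : C ⊆ D) (hz : z +ᵥ C ⊆ D) :
    (D + S)ᶜ ⊆ (C + S)ᶜ ∩ (z +ᵥ (C + S)ᶜ) := by
  rw [Set.vadd_set_compl, ← Set.compl_union, Set.compl_subset_compl, ← vadd_add_assoc,
    ← Set.union_add]
  exact Set.add_subset_add_right (Set.union_subset hC hz)

variable {K : Type*} [DivisionRing K] [Module K V] [Finite V]

theorem exists_submodule_finrank_le_ncard_compl_add_le (S : Set V) (k : ℕ) :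
    ∃ C : Submodule K V, Module.finrank K C ≤ k ∧
      ((C : Set V) + S)ᶜ.ncard * Nat.card V ^ 2 ^ k ≤ Nat.card V * Sᶜ.ncard ^ 2 ^ k := by
  induction k with
  | zero => exact ⟨⊥, by simp, by simp [mul_comm]⟩
  | succ k ih =>
    obtain ⟨C, hCk, hC⟩ := ih
    obtain ⟨z, hz⟩ := ((C : Set V) + S)ᶜ.exists_ncard_inter_vadd_mul_le
    refine ⟨C ⊔ K ∙ z, ?_, ?_⟩
    · calc Module.finrank K ↥(C ⊔ K ∙ z) ≤ Module.finrank K C + Module.finrank K (K ∙ z) :=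
            Submodule.finrank_add_le_finrank_add_finrank _ _
        _ ≤ k + 1 := add_le_add hCk (by simpa using finrank_span_le_card (R := K) {z})
    · have hsub : (((C ⊔ K ∙ z : Submodule K V) : Set V) + S)ᶜ.ncard ≤
          (((C : Set V) + S)ᶜ ∩ (z +ᵥ ((C : Set V) + S)ᶜ)).ncard := by
        refine Set.ncard_le_ncard (compl_add_subset_inter_vadd (le_sup_left : C ≤ C ⊔ K ∙ z) ?_)
        rintro _ ⟨c, hc, rfl⟩
        exact add_mem (Submodule.mem_sup_right (Submodule.mem_span_singleton_self z))
          (Submodule.mem_sup_left hc)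
      set N := Nat.card V
      set u := ((C : Set V) + S)ᶜ.ncard
      set u' := (((C ⊔ K ∙ z : Submodule K V) : Set V) + S)ᶜ.ncard
      have hN : 0 < N := Nat.card_pos
      refine Nat.le_of_mul_le_mul_right ?_ hN
      calc u' * N ^ 2 ^ (k + 1) * N ≤ u ^ 2 * N ^ 2 ^ (k + 1) := by
            rw [mul_right_comm]
            exact Nat.mul_le_mul_right _ ((Nat.mul_le_mul_right _ hsub).trans hz)
        _ = (u * N ^ 2 ^ k) ^ 2 := by ring
        _ ≤ (N * Sᶜ.ncard ^ 2 ^ k) ^ 2 := Nat.pow_le_pow_left hC 2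
        _ = N * Sᶜ.ncard ^ 2 ^ (k + 1) * N := by ring

theorem exists_submodule_finrank_le_add_eq_univ {S : Set V} (hS : S.Nonempty) {k : ℕ}
    (hk : Nat.card V * Real.log (Nat.card V) ≤ 2 ^ k * S.ncard) :
    ∃ C : Submodule K V, Module.finrank K C ≤ k ∧ (C : Set V) + S = Set.univ := by
  obtain ⟨C, hCk, hC⟩ := exists_submodule_finrank_le_ncard_compl_add_le (K := K) S k
  have hlt : Nat.card V * Sᶜ.ncard ^ 2 ^ k < Nat.card V ^ 2 ^ k := by
    rw [Set.ncard_compl]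
    exact mul_sub_pow_lt_pow ((Set.ncard_pos).2 hS) (Set.ncard_le_card S) (by positivity)
      (by exact_mod_cast hk)
  have hu : ((C : Set V) + S)ᶜ.ncard = 0 :=
    Nat.lt_one_iff.1 <| Nat.lt_of_mul_lt_mul_right (a := Nat.card V ^ 2 ^ k) <| by
      rw [one_mul]; exact hC.trans_lt hlt
  exact ⟨C, hCk, by simpa using (Set.ncard_eq_zero (Set.toFinite _)).1 hu⟩

end Covering

theorem covRad_le_of_add_eq_univ {n : ℕ} {C : Set (Fin n → ZMod 2)} {R : ℝ} (hR : 0 ≤ R)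
    (hC : C + {x | (hammingNorm x : ℝ) ≤ R} = Set.univ) : covRad n C ≤ R := by
  refine csInf_le ⟨0, fun r hr ↦ hr.1⟩ ⟨hR, fun x ↦ ?_⟩
  obtain ⟨c, hc, s, hs, rfl⟩ : x ∈ C + {x | (hammingNorm x : ℝ) ≤ R} := hC ▸ Set.mem_univ x
  exact ⟨c, hc, by rwa [← add_assoc, ZModModule.add_self, zero_add]⟩

theorem le_two_pow_of_ceil_logb_eq {x : ℝ} {k : ℕ} (h : ⌈Real.logb 2 x⌉ = k) : x ≤ 2 ^ k := by
  rcases le_or_gt x 0 with hx | hx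
  · exact hx.trans (by positivity)
  · rw [← Real.rpow_natCast, ← Real.logb_le_iff_le_rpow one_lt_two hx]
    exact_mod_cast h ▸ Int.le_ceil _

theorem ceil_logb_two_nonneg {x : ℝ} (hx : 1 / 2 < x) : 0 ≤ ⌈Real.logb 2 x⌉ := by
  have : (-1 : ℤ) < ⌈Real.logb 2 x⌉ := by
    rw [Int.lt_ceil, Int.cast_neg, Int.cast_one,
      Real.lt_logb_iff_rpow_lt one_lt_two (by linarith), Real.rpow_neg_one]
    linarith
  omega

theorem cohen_sphere_covering_bound_general
    (n : ℕ) (hn : 1 ≤ n) (R : ℝ) (hR0 : 0 < R) :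
    ∃ C : Submodule (ZMod 2) (Fin n → ZMod 2),
      (Module.finrank (ZMod 2) C : ℤ) ≤
        ⌈Real.logb 2 ((n : ℝ) * Real.log 2 /
          ((Nat.card {x : Fin n → ZMod 2 // (hammingNorm x : ℝ) ≤ R} : ℝ) / 2 ^ n))⌉ ∧
      covRad n (C : Set (Fin n → ZMod 2)) ≤ R := by
  set S : Set (Fin n → ZMod 2) := {x | (hammingNorm x : ℝ) ≤ R}
  rw [show Nat.card {x : Fin n → ZMod 2 // (hammingNorm x : ℝ) ≤ R} = S.ncard from rfl]
  have hS : S.Nonempty := ⟨0, by simpa [S] using hR0.le⟩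
  have hcard : Nat.card (Fin n → ZMod 2) = 2 ^ n := by simp
  have hv0 : 0 < (S.ncard : ℝ) / 2 ^ n := by have := (Set.ncard_pos).2 hS; positivity
  have hv1 : (S.ncard : ℝ) / 2 ^ n ≤ 1 := by
    rw [div_le_one (by positivity)]; exact_mod_cast hcard ▸ Set.ncard_le_card S
  have hratio : 1 / 2 < (n : ℝ) * Real.log 2 / (S.ncard / 2 ^ n) := by
    have hn' : (1 : ℝ) ≤ n := by exact_mod_cast hn
    have hle : (n : ℝ) * Real.log 2 ≤ n * Real.log 2 / (S.ncard / 2 ^ n) :=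
      le_div_self (by positivity) hv0 hv1
    nlinarith [Real.log_two_gt_d9]
  obtain ⟨k, hk⟩ := Int.eq_ofNat_of_zero_le (ceil_logb_two_nonneg hratio)
  obtain ⟨C, hCk, hCS⟩ := exists_submodule_finrank_le_add_eq_univ (K := ZMod 2) hS (k := k) <| by
    have h2k := (div_le_iff₀ hv0).1 (le_two_pow_of_ceil_logb_eq hk)
    rw [mul_div_assoc', le_div_iff₀ (by positivity)] at h2k
    rw [hcard, Nat.cast_pow, Real.log_pow, Nat.cast_ofNat]
    linarith
  exact ⟨C, hk ▸ Int.ofNat_le.2 hCk, covRad_le_of_add_eq_univ hR0.le hCS⟩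

/-- Cohen. For every `n ≥ 1` and `0 < R ≤ n`, there is a linear code
`C ⊆ F_2^n` of covering radius at most `R` and dimension `k ≤ ⌈log₂(n (log 2) / v_n(R))⌉`. -/
theorem cohen_sphere_covering_bound
    (n : ℕ) (hn : 1 ≤ n) (R : ℝ) (hR0 : 0 < R) (hRn : R ≤ n) :
    ∃ C : Submodule (ZMod 2) (Fin n → ZMod 2),
      (Module.finrank (ZMod 2) C : ℤ) ≤
        ⌈Real.logb 2 ((n : ℝ) * Real.log 2 /
          ((Nat.card {x : Fin n → ZMod 2 // (hammingNorm x : ℝ) ≤ R} : ℝ) / 2 ^ n))⌉ ∧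
      covRad n (C : Set (Fin n → ZMod 2)) ≤ R :=
  cohen_sphere_covering_bound_general n hn R hR0
end

section
/- Let 0 ≤ ε < 1 and n ≥ 1. Then for every nonempty code C ⊆ F_2^n of size K, the ε-covering radius of C is at least n/2 − √( (n/2) · log( K/(1−ε) ) ), where log denotes the natural logarithm. -/
/-! Each codeword covers a Hamming ball of radius `r`, and by the Chernoff–Hoeffding bound a ball
of radius `n/2 - t` contains at most `2^n e^{-2t²/n}` points. If `K` such balls cover a
`(1 - ε)`-fraction of the space, then `1 - ε ≤ K e^{-2t²/n}`, that is
`t ≤ √((n/2) log(K/(1-ε)))`. -/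

open Finset

/-- The fraction of points of `F_2^n` not contained in the `r`-neighborhood `B_n(C; r)`
of a set `C ⊆ F_2^n`. -/
noncomputable def uncoveredFrac (n : ℕ) (C : Set (Fin n → ZMod 2)) (r : ℝ) : ℝ :=
  (Nat.card {x : Fin n → ZMod 2 // ¬ ∃ c ∈ C, (hammingNorm (c + x) : ℝ) ≤ r} : ℝ) / 2 ^ n

/-- The `ε`-covering radius of `C ⊆ F_2^n`: the least `r ≥ 0` such that the fraction of
points of `F_2^n` not contained in `B_n(C; r)` is at most `ε`. -/
noncomputable def epsCovRad (n : ℕ) (C : Set (Fin n → ZMod 2)) (ε : ℝ) : ℝ :=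
  sInf {r : ℝ | 0 ≤ r ∧ uncoveredFrac n C r ≤ ε}

open Real
open scoped Pointwise

lemma card_filter_le_le_exp_mul_sum_exp {α : Type*} (s : Finset α) (f : α → ℝ) (a : ℝ) {l : ℝ}
    (hl : 0 ≤ l) : (#{x ∈ s | f x ≤ a} : ℝ) ≤ exp (l * a) * ∑ x ∈ s, exp (-l * f x) := by
  calc (#{x ∈ s | f x ≤ a} : ℝ) = ∑ x ∈ s with f x ≤ a, 1 := by simp
    _ ≤ ∑ x ∈ s with f x ≤ a, exp (l * a) * exp (-l * f x) := by
      refine sum_le_sum fun x hx => ?_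
      rw [← exp_add]
      exact one_le_exp (by nlinarith [(mem_filter.1 hx).2])
    _ ≤ ∑ x ∈ s, exp (l * a) * exp (-l * f x) :=
      sum_le_sum_of_subset_of_nonneg (filter_subset _ _) fun _ _ _ => by positivity
    _ = exp (l * a) * ∑ x ∈ s, exp (-l * f x) := (Finset.mul_sum _ _ _).symm

lemma sum_exp_neg_mul_hammingNorm (ι : Type*) [Fintype ι] [DecidableEq ι] (l : ℝ) :
    ∑ y : ι → ZMod 2, exp (-l * hammingNorm y) = (1 + exp (-l)) ^ Fintype.card ι := by
  have hterm : ∀ y : ι → ZMod 2,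
      exp (-l * hammingNorm y) = ∏ i, exp (-l * if y i = 0 then 0 else 1) := by
    intro y
    rw [← exp_sum, ← Finset.mul_sum, hammingNorm, card_filter]
    push_cast
    simp only [ite_not]
  rw [Fintype.sum_congr _ _ hterm,
    ← Fintype.prod_sum fun (_ : ι) (a : ZMod 2) => exp (-l * if a = 0 then 0 else 1),
    prod_const, card_univ]
  congr 1
  rw [show (univ : Finset (ZMod 2)) = {0, 1} from rfl, sum_pair zero_ne_one]
  simp

lemma one_add_exp_neg_le (l : ℝ) : 1 + exp (-l) ≤ 2 * exp (-l / 2 + l ^ 2 / 8) := by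
  have hcosh : 1 + exp (-l) = 2 * (exp (-l / 2) * cosh (l / 2)) := by
    rw [cosh_eq, mul_div_assoc', mul_add, ← exp_add, ← exp_add]
    ring_nf
    simp [add_comm]
  calc 1 + exp (-l) = 2 * (exp (-l / 2) * cosh (l / 2)) := hcosh
    _ ≤ 2 * (exp (-l / 2) * exp ((l / 2) ^ 2 / 2)) := by gcongr; exact cosh_le_exp_half_sq _
    _ = 2 * exp (-l / 2 + l ^ 2 / 8) := by rw [← exp_add]; ring_nf

lemma natCard_hammingNorm_le_le_two_pow_mul_exp {n : ℕ} (hn : 0 < n) {r : ℝ} (hr : r ≤ n / 2) :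
    (Nat.card {y : Fin n → ZMod 2 // (hammingNorm y : ℝ) ≤ r} : ℝ)
      ≤ 2 ^ n * exp (-2 * (n / 2 - r) ^ 2 / n) := by
  have hn' : (0 : ℝ) < n := by exact_mod_cast hn
  -- `l` minimises the Chernoff exponent `-l (n/2 - r) + n l² / 8`.
  set l : ℝ := 4 * (n / 2 - r) / n
  have hl : 0 ≤ l := div_nonneg (by linarith) hn'.le
  rw [Nat.card_eq_fintype_card, Fintype.card_subtype]
  calc _ ≤ exp (l * r) * (1 + exp (-l)) ^ n := by
        refine (card_filter_le_le_exp_mul_sum_exp univ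
          (fun y : Fin n → ZMod 2 => (hammingNorm y : ℝ)) r hl).trans_eq ?_
        rw [sum_exp_neg_mul_hammingNorm, Fintype.card_fin]
    _ ≤ exp (l * r) * (2 * exp (-l / 2 + l ^ 2 / 8)) ^ n := by gcongr; exact one_add_exp_neg_le l
    _ = 2 ^ n * exp (l * r + n * (-l / 2 + l ^ 2 / 8)) := by
        rw [mul_pow, ← exp_nat_mul, exp_add]; ring
    _ = 2 ^ n * exp (-2 * (n / 2 - r) ^ 2 / n) := by
        congr 2; simp only [l]; field_simp; ring

lemma natCard_exists_add_mem_le {G : Type*} [AddGroup G] (C B : Set G) :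
    Nat.card {x : G // ∃ c ∈ C, c + x ∈ B} ≤ Nat.card C * Nat.card B := by
  have hset : {x : G | ∃ c ∈ C, c + x ∈ B} = -C + B := by
    ext x
    simp only [Set.mem_ofPred_eq, Set.mem_add, Set.mem_neg]
    constructor
    · rintro ⟨c, hc, hcx⟩
      exact ⟨-c, by simpa using hc, c + x, hcx, neg_add_cancel_left c x⟩
    · rintro ⟨a, ha, b, hb, rfl⟩
      exact ⟨-a, ha, by simpa using hb⟩
  calc Nat.card {x : G // ∃ c ∈ C, c + x ∈ B} = Nat.card ↥(-C + B) := by rw [← hset]; rfl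
    _ ≤ Nat.card ↥(-C) * Nat.card B := Set.natCard_add_le
    _ = Nat.card C * Nat.card B := by rw [Set.natCard_neg]

lemma abs_le_sqrt_mul_log_div_of_le_mul_exp {s a K t : ℝ} (hs : 0 < s) (ha : 0 < a)
    (h : a ≤ K * exp (-2 * t ^ 2 / s)) : |t| ≤ √(s / 2 * log (K / a)) := by
  have hK : 0 < K := pos_of_mul_pos_left (ha.trans_le h) (exp_pos _).le
  have hexp : exp (2 * t ^ 2 / s) ≤ K / a := by
    rw [le_div_iff₀ ha]
    calc exp (2 * t ^ 2 / s) * a ≤ exp (2 * t ^ 2 / s) * (K * exp (-2 * t ^ 2 / s)) := by gcongr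
      _ = K := by rw [mul_left_comm, ← exp_add]; ring_nf; simp
  have hlog := (le_log_iff_exp_le (div_pos hK ha)).2 hexp
  apply abs_le_sqrt
  calc t ^ 2 = s / 2 * (2 * t ^ 2 / s) := by field_simp
    _ ≤ s / 2 * log (K / a) := by gcongr

lemma uncoveredFrac_eq_zero_of_le {n : ℕ} {C : Set (Fin n → ZMod 2)} (hC : C.Nonempty) {r : ℝ}
    (hr : n ≤ r) : uncoveredFrac n C r = 0 := by
  obtain ⟨c, hc⟩ := hC
  have : IsEmpty {x : Fin n → ZMod 2 // ¬ ∃ c ∈ C, (hammingNorm (c + x) : ℝ) ≤ r} :=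
    ⟨fun x => x.2 ⟨c, hc,
      le_trans (by simpa using hammingNorm_le_card_fintype (x := c + x.1)) hr⟩⟩
  rw [uncoveredFrac, Nat.card_of_isEmpty, Nat.cast_zero, zero_div]

lemma one_sub_uncoveredFrac (n : ℕ) (C : Set (Fin n → ZMod 2)) (r : ℝ) :
    1 - uncoveredFrac n C r
      = Nat.card {x : Fin n → ZMod 2 // ∃ c ∈ C, (hammingNorm (c + x) : ℝ) ≤ r} / 2 ^ n := by
  classical
  rw [uncoveredFrac, Nat.card_eq_fintype_card, Nat.card_eq_fintype_card,
    Fintype.card_subtype_compl, Nat.cast_sub (Fintype.card_subtype_le _)]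
  simp only [Fintype.card_pi, ZMod.card, prod_const, card_univ, Fintype.card_fin, Nat.cast_pow,
    Nat.cast_ofNat]
  field_simp
  ring

theorem sphere_covering_bound_almost_all_general
    (ε : ℝ) (hε0 : 0 ≤ ε) (hε1 : ε < 1) (n : ℕ)
    (C : Set (Fin n → ZMod 2)) (hC : C.Nonempty) (K : ℕ) (hK : K = Nat.card C) :
    (n : ℝ) / 2 - Real.sqrt ((n : ℝ) / 2 * Real.log ((K : ℝ) / (1 - ε)))
      ≤ epsCovRad n C ε := by
  have hfeasible : (n : ℝ) ∈ {r : ℝ | 0 ≤ r ∧ uncoveredFrac n C r ≤ ε} :=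
    ⟨n.cast_nonneg, (uncoveredFrac_eq_zero_of_le hC le_rfl).trans_le hε0⟩
  refine le_csInf ⟨n, hfeasible⟩ fun r ⟨hr0, hrε⟩ => ?_
  obtain hr | hr := le_or_gt ((n : ℝ) / 2) r
  · linarith [sqrt_nonneg ((n : ℝ) / 2 * log ((K : ℝ) / (1 - ε)))]
  have hn : 0 < n := by exact_mod_cast (show (0 : ℝ) < n by linarith)
  have hcovered : 1 - ε ≤ K * exp (-2 * (n / 2 - r) ^ 2 / n) := calc
    1 - ε ≤ 1 - uncoveredFrac n C r := by linarith
    _ = Nat.card {x : Fin n → ZMod 2 // ∃ c ∈ C, (hammingNorm (c + x) : ℝ) ≤ r} / 2 ^ n :=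
      one_sub_uncoveredFrac n C r
    _ ≤ K * Nat.card {y : Fin n → ZMod 2 // (hammingNorm y : ℝ) ≤ r} / 2 ^ n := by
      gcongr
      rw [hK]
      exact_mod_cast natCard_exists_add_mem_le C {y | (hammingNorm y : ℝ) ≤ r}
    _ ≤ K * (2 ^ n * exp (-2 * (n / 2 - r) ^ 2 / n)) / 2 ^ n := by
      gcongr
      exact natCard_hammingNorm_le_le_two_pow_mul_exp hn hr.le
    _ = K * exp (-2 * (n / 2 - r) ^ 2 / n) := by field_simp
  have := abs_le_sqrt_mul_log_div_of_le_mul_exp (by positivity) (sub_pos.2 hε1) hcovered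
  linarith [le_abs_self ((n : ℝ) / 2 - r)]

/-- sphere-covering bound for almost-all covers. For `0 ≤ ε < 1`,
`n ≥ 1` and any nonempty code `C ⊆ F_2^n` of size `K`, the `ε`-covering radius of `C` is
at least `n/2 − √((n/2) log(K/(1−ε)))`. -/
theorem sphere_covering_bound_almost_all
    (ε : ℝ) (hε0 : 0 ≤ ε) (hε1 : ε < 1) (n : ℕ) (hn : 1 ≤ n)
    (C : Set (Fin n → ZMod 2)) (hC : C.Nonempty) (K : ℕ) (hK : K = Nat.card C) :
    (n : ℝ) / 2 - Real.sqrt ((n : ℝ) / 2 * Real.log ((K : ℝ) / (1 - ε)))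
      ≤ epsCovRad n C ε :=
  sphere_covering_bound_almost_all_general ε hε0 hε1 n C hC K hK
end
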